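/- Let M be a graded A-module and K a graded classical weakly prime A-submodule of M. If there exists a graded classical triple zero (x, y, L) of K with x, y ∈ A_e, then (K :_{A_e} M)³ ⊆ Ann_{A_e}(M). In particular, if M is faithful, then (K :_{A_e} M)³ = 0. -/

import Mathlib

section GCWP

variable {G : Type*} [AddGroup G] [DecidableEq G]
variable {A : Type*} [Ring A] {M : Type*} [AddCommGroup M] [Module A M]

/-- A submodule is graded (homogeneous) if it is generated by its homogeneous elements. -/
def IsGrSub (ℳ : G → AddSubgroup M) (K : Submodule A M) : Prop :=
  K ≤ Submodule.span A ((K : Set M) ∩ {m | SetLike.IsHomogeneousElem ℳ m})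

/-- `K` is a graded classical weakly prime submodule. -/
def IsGCWP (𝒜 : G → AddSubgroup A) (ℳ : G → AddSubgroup M) (K : Submodule A M) : Prop :=
  K ≠ ⊤ ∧ IsGrSub ℳ K ∧
  ∀ x y : A, SetLike.IsHomogeneousElem 𝒜 x → SetLike.IsHomogeneousElem 𝒜 y →
    ∀ L : Submodule A M, IsGrSub ℳ L →
      (∃ a : A, ∃ l ∈ L, (x * a * y) • l ≠ 0) →
      (∀ a : A, ∀ l ∈ L, (x * a * y) • l ∈ K) →
      (∀ l ∈ L, x • l ∈ K) ∨ (∀ l ∈ L, y • l ∈ K)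

/-- `K` is a graded classical prime submodule. -/
def IsGCP (𝒜 : G → AddSubgroup A) (ℳ : G → AddSubgroup M) (K : Submodule A M) : Prop :=
  K ≠ ⊤ ∧ IsGrSub ℳ K ∧
  ∀ x y : A, SetLike.IsHomogeneousElem 𝒜 x → SetLike.IsHomogeneousElem 𝒜 y →
    ∀ L : Submodule A M, IsGrSub ℳ L →
      (∀ a : A, ∀ l ∈ L, (x * a * y) • l ∈ K) →
      (∀ l ∈ L, x • l ∈ K) ∨ (∀ l ∈ L, y • l ∈ K)

/-- `(x, y, L)` is a graded classical triple zero of `K`. -/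
def TripleZero (K : Submodule A M) (x y : A) (L : Submodule A M) : Prop :=
  (∀ a : A, ∀ l ∈ L, (x * a * y) • l = 0) ∧
    ¬ (∀ l ∈ L, x • l ∈ K) ∧ ¬ (∀ l ∈ L, y • l ∈ K)

/-- `L` is an `A_e`-submodule of `M_g` (as an additive subgroup of `M`). -/
def IsAeSub (𝒜 : G → AddSubgroup A) (ℳ : G → AddSubgroup M) (g : G) (L : AddSubgroup M) : Prop :=
  (L : Set M) ⊆ (ℳ g : Set M) ∧ ∀ a ∈ 𝒜 0, ∀ l ∈ L, a • l ∈ L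

/-- `L` is a faithful `A_e`-module. -/
def AeFaithful (𝒜 : G → AddSubgroup A) (L : AddSubgroup M) : Prop :=
  ∀ a ∈ 𝒜 0, (∀ l ∈ L, a • l = 0) → a = 0

/-- `I` is an ideal of `A_e` (as an additive subgroup of `A`). -/
def IsAeIdeal (𝒜 : G → AddSubgroup A) (I : AddSubgroup A) : Prop :=
  (I : Set A) ⊆ (𝒜 0 : Set A) ∧ ∀ a ∈ 𝒜 0, ∀ r ∈ I, a * r ∈ I ∧ r * a ∈ I

/-- `K` is a `g`-classical weakly prime submodule of `M`. -/
def IsgCWP (𝒜 : G → AddSubgroup A) (ℳ : G → AddSubgroup M) (g : G) (K : Submodule A M) :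
    Prop :=
  IsGrSub ℳ K ∧ ¬ ((ℳ g : Set M) ⊆ (K : Set M)) ∧
  ∀ x ∈ 𝒜 0, ∀ y ∈ 𝒜 0, ∀ L : AddSubgroup M, IsAeSub 𝒜 ℳ g L →
    (∃ a ∈ 𝒜 0, ∃ l ∈ L, (x * a * y) • l ≠ 0) →
    (∀ a ∈ 𝒜 0, ∀ l ∈ L, (x * a * y) • l ∈ K) →
    (∀ l ∈ L, x • l ∈ K) ∨ (∀ l ∈ L, y • l ∈ K)

/-- `P` is a weakly prime (proper) left ideal of `A_e`, given as a subset of `A`. -/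
def IsWeaklyPrimeAe (𝒜 : G → AddSubgroup A) (P : Set A) : Prop :=
  P ⊆ (𝒜 0 : Set A) ∧ ¬ ((𝒜 0 : Set A) ⊆ P) ∧
  (0 : A) ∈ P ∧ (∀ p ∈ P, ∀ q ∈ P, p + q ∈ P) ∧ (∀ p ∈ P, -p ∈ P) ∧
  (∀ a ∈ 𝒜 0, ∀ p ∈ P, a * p ∈ P) ∧
  ∀ I J : AddSubgroup A, IsAeIdeal 𝒜 I → IsAeIdeal 𝒜 J →
    (∃ i ∈ I, ∃ j ∈ J, i * j ≠ 0) → (∀ i ∈ I, ∀ j ∈ J, i * j ∈ P) →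
    (I : Set A) ⊆ P ∨ (J : Set A) ⊆ P

end GCWP

section GW2A
variable {G : Type*} [AddGroup G] [DecidableEq G]
variable {A : Type*} [Ring A] {M : Type*} [AddCommGroup M] [Module A M]

/-- `K` is a graded weakly 2-absorbing submodule. -/
def IsGW2A (𝒜 : G → AddSubgroup A) (ℳ : G → AddSubgroup M) (K : Submodule A M) : Prop :=
  K ≠ ⊤ ∧ IsGrSub ℳ K ∧
  ∀ x y : A, SetLike.IsHomogeneousElem 𝒜 x → SetLike.IsHomogeneousElem 𝒜 y →
    ∀ L : Submodule A M, IsGrSub ℳ L →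
      (∃ a : A, ∃ l ∈ L, (x * a * y) • l ≠ 0) →
      (∀ a : A, ∀ l ∈ L, (x * a * y) • l ∈ K) →
      (∀ l ∈ L, x • l ∈ K) ∨ (∀ l ∈ L, y • l ∈ K) ∨
        (∀ a : A, ∀ m : M, (x * a * y) • m ∈ K)

end GW2A

/-!
For `r, s` in `(K :_{A_e} M)` we still have `(x + r) A (y + s) (L + K) ⊆ K`, since `x A y L = 0`
and every other term carries a factor `r` or `s`. As `x + r` and `y + s` do not map `L` into `K`
(they differ from `x`, `y` by elements of the colon), weak primeness forces
`(x + r) A (y + s) (L + K) = 0`. Combining the four choices `r` or `0`, `s` or `0` gives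
`r A s (L + K) = 0`, and `t M ⊆ K ⊆ L + K` for `t` in the colon, so `r s t M = 0`.
-/

section

variable {G : Type*} {A : Type*} [Ring A] {M : Type*} [AddCommGroup M] [Module A M]
variable {𝒜 : G → AddSubgroup A} {ℳ : G → AddSubgroup M}

theorem IsGrSub.sup {K L : Submodule A M} (hK : IsGrSub ℳ K) (hL : IsGrSub ℳ L) :
    IsGrSub ℳ (K ⊔ L) :=
  sup_le (hK.trans (Submodule.span_mono fun _ hm => ⟨Submodule.mem_sup_left hm.1, hm.2⟩))
    (hL.trans (Submodule.span_mono fun _ hm => ⟨Submodule.mem_sup_right hm.1, hm.2⟩))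

variable {K L : Submodule A M} {x y r s : A}

theorem add_mul_add_smul_mem_of_mul_smul_eq_zero (hxy : ∀ b : A, ∀ l ∈ L, (x * b * y) • l = 0)
    (hrK : ∀ m : M, r • m ∈ K) (hsK : ∀ m : M, s • m ∈ K) (b : A) :
    ∀ p ∈ L ⊔ K, ((x + r) * b * (y + s)) • p ∈ K := by
  intro p hp
  obtain ⟨l, hl, k, hk, rfl⟩ := Submodule.mem_sup.mp hp
  have hexpand : (x + r) * b * (y + s) = x * b * y + (x * b) * s + r * (b * (y + s)) := by
    noncomm_ring
  rw [smul_add, hexpand, add_smul, add_smul, hxy b l hl, zero_add, mul_smul (x * b),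
    mul_smul r]
  exact K.add_mem (K.add_mem (K.smul_mem _ (hsK l)) (hrK _)) (K.smul_mem _ hk)

theorem smul_mem_of_add_smul_mem {l : M} (h : (x + r) • l ∈ K) (hrK : ∀ m : M, r • m ∈ K) :
    x • l ∈ K := by
  simpa [add_smul] using K.sub_mem h (hrK l)

namespace TripleZero

theorem add_mul_add_smul_eq_zero (htz : TripleZero K x y L) (hK : IsGCWP 𝒜 ℳ K)
    (hL : IsGrSub ℳ L) {i j : G} (hx : x ∈ 𝒜 i) (hr : r ∈ 𝒜 i) (hrK : ∀ m : M, r • m ∈ K)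
    (hy : y ∈ 𝒜 j) (hs : s ∈ 𝒜 j) (hsK : ∀ m : M, s • m ∈ K) (b : A) :
    ∀ p ∈ L ⊔ K, ((x + r) * b * (y + s)) • p = 0 := by
  by_contra! hne
  obtain ⟨p, hp, hne⟩ := hne
  have hsub := add_mul_add_smul_mem_of_mul_smul_eq_zero htz.1 hrK hsK
  rcases hK.2.2 (x + r) (y + s) ⟨i, add_mem hx hr⟩ ⟨j, add_mem hy hs⟩ (L ⊔ K)
      (hL.sup hK.2.1) ⟨b, p, hp, hne⟩ hsub with hxr | hys
  · exact htz.2.1 fun l hl => smul_mem_of_add_smul_mem (hxr l (Submodule.mem_sup_left hl)) hrK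
  · exact htz.2.2 fun l hl => smul_mem_of_add_smul_mem (hys l (Submodule.mem_sup_left hl)) hsK

theorem mul_mul_smul_eq_zero (htz : TripleZero K x y L) (hK : IsGCWP 𝒜 ℳ K)
    (hL : IsGrSub ℳ L) {i j : G} (hx : x ∈ 𝒜 i) (hr : r ∈ 𝒜 i) (hrK : ∀ m : M, r • m ∈ K)
    (hy : y ∈ 𝒜 j) (hs : s ∈ 𝒜 j) (hsK : ∀ m : M, s • m ∈ K) (b : A) :
    ∀ p ∈ L ⊔ K, (r * b * s) • p = 0 := by
  intro p hp
  have h0K : ∀ m : M, (0 : A) • m ∈ K := fun m => by simp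
  have hrs := htz.add_mul_add_smul_eq_zero hK hL hx hr hrK hy hs hsK b p hp
  have hr0 := htz.add_mul_add_smul_eq_zero hK hL hx hr hrK hy (zero_mem _) h0K b p hp
  have h0s := htz.add_mul_add_smul_eq_zero hK hL hx (zero_mem _) h0K hy hs hsK b p hp
  have h00 := htz.add_mul_add_smul_eq_zero hK hL hx (zero_mem _) h0K hy (zero_mem _) h0K b p hp
  have hexpand : r * b * s = (x + r) * b * (y + s) - (x + r) * b * (y + 0)
      - (x + 0) * b * (y + s) + (x + 0) * b * (y + 0) := by
    noncomm_ring
  rw [hexpand, add_smul, sub_smul, sub_smul, hrs, hr0, h0s, h00]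
  simp

end TripleZero

end

section Theorems

variable {G : Type*} [AddGroup G] [DecidableEq G]
variable {A : Type*} [Ring A] {M : Type*} [AddCommGroup M] [Module A M]
variable (𝒜 : G → AddSubgroup A) (ℳ : G → AddSubgroup M)
variable [SetLike.GradedMonoid 𝒜] [SetLike.GradedSMul 𝒜 ℳ]
variable [DirectSum.Decomposition 𝒜] [DirectSum.Decomposition ℳ]

theorem stmt14 (K : Submodule A M) (hK : IsGCWP 𝒜 ℳ K)
    (x y : A) (hx : x ∈ 𝒜 0) (hy : y ∈ 𝒜 0)
    (L : Submodule A M) (hL : IsGrSub ℳ L) (htz : TripleZero K x y L) :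
    (∀ r ∈ 𝒜 0, (∀ m : M, r • m ∈ K) → ∀ s ∈ 𝒜 0, (∀ m : M, s • m ∈ K) →
      ∀ t ∈ 𝒜 0, (∀ m : M, t • m ∈ K) → ∀ m : M, (r * s * t) • m = 0) ∧
    ((∀ a : A, (∀ m : M, a • m = 0) → a = 0) →
      ∀ r ∈ 𝒜 0, (∀ m : M, r • m ∈ K) → ∀ s ∈ 𝒜 0, (∀ m : M, s • m ∈ K) →
        ∀ t ∈ 𝒜 0, (∀ m : M, t • m ∈ K) → r * s * t = 0) := by
  have hcube : ∀ r ∈ 𝒜 0, (∀ m : M, r • m ∈ K) → ∀ s ∈ 𝒜 0, (∀ m : M, s • m ∈ K) →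
      ∀ t ∈ 𝒜 0, (∀ m : M, t • m ∈ K) → ∀ m : M, (r * s * t) • m = 0 := by
    intro r hr hrK s hs hsK t _ htK m
    rw [mul_smul, ← mul_one r]
    exact htz.mul_mul_smul_eq_zero hK hL hx hr hrK hy hs hsK 1 _ (Submodule.mem_sup_right (htK m))
  exact ⟨hcube, fun hfaithful r hr hrK s hs hsK t ht htK =>
    hfaithful _ (hcube r hr hrK s hs hsK t ht htK)⟩

end Theorems
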